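/- If (T₁,T₂) has the skewed bivariate Birnbaum–Saunders density with parameters (α₁, α₂, β₁, β₂, λ), then the marginal density of T₁ is the univariate Birnbaum–Saunders density with parameters (α₁, β₁): for every t₁ > 0, ∫_0^∞ f(t₁,t₂) dt₂ = f_BS(t₁; α₁, β₁). -/

import Mathlib

open Real MeasureTheory

/-- Standard normal pdf. -/
noncomputable def phi (x : ℝ) : ℝ := (Real.sqrt (2 * Real.pi))⁻¹ * Real.exp (-x ^ 2 / 2)

/-- Standard normal cdf. -/
noncomputable def Phi (x : ℝ) : ℝ := ∫ t in Set.Iic x, phi t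

noncomputable def aj (a b t : ℝ) : ℝ := (1/a) * (Real.sqrt (t / b) - Real.sqrt (b / t))

/-- Skewed bivariate Birnbaum–Saunders density. -/
noncomputable def fSBVBS (a1 a2 b1 b2 l t1 t2 : ℝ) : ℝ :=
  2 * phi (aj a1 b1 t1) * phi (aj a2 b2 t2) * Phi (l * (aj a1 b1 t1) * (aj a2 b2 t2)) *
    (t1 ^ (-(3:ℝ)/2) * (t1 + b1) / (2 * a1 * Real.sqrt b1)) *
    (t2 ^ (-(3:ℝ)/2) * (t2 + b2) / (2 * a2 * Real.sqrt b2))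

/-- Birnbaum–Saunders density with shape α and scale β. -/
noncomputable def fBS (a b t : ℝ) : ℝ :=
  t ^ (-(3:ℝ)/2) * (t + b) / (2 * Real.sqrt (2 * Real.pi) * a * Real.sqrt b) *
    Real.exp (-(1/(2 * a ^ 2)) * (t / b + b / t - 2))

/-!
The map `t ↦ aj a b t` is a strictly increasing bijection of `(0, ∞)` onto `ℝ` whose derivative is
the Jacobian factor `t^{-3/2} (t + β) / (2 α √β)` of the densities. Substituting `x = aj a₂ b₂ t₂`
turns the marginal integral into `2 φ(a₁) a₁' ∫ φ(x) Φ(λ a₁ x) dx`, and the last integral is `1/2`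
for every `λ a₁` because `φ` is even and `Φ(y) + Φ(-y) = 1`. Finally `φ(a₁(t)) a₁'(t)` is the
Birnbaum–Saunders density, since `a₁(t)² = (t/β + β/t - 2)/α²`.
-/

open ProbabilityTheory

lemma phi_eq_gaussianPDFReal : phi = gaussianPDFReal 0 1 := by
  ext x
  simp [phi, gaussianPDFReal]

lemma phi_nonneg (x : ℝ) : 0 ≤ phi x := by
  unfold phi
  positivity

lemma phi_neg (x : ℝ) : phi (-x) = phi x := by
  simp [phi]

lemma integrable_phi : Integrable phi :=
  phi_eq_gaussianPDFReal ▸ integrable_gaussianPDFReal 0 1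

lemma integral_phi : ∫ x, phi x = 1 :=
  phi_eq_gaussianPDFReal ▸ integral_gaussianPDFReal_eq_one 0 one_ne_zero

lemma Phi_nonneg (x : ℝ) : 0 ≤ Phi x :=
  setIntegral_nonneg measurableSet_Iic fun y _ => phi_nonneg y

lemma Phi_le_one (x : ℝ) : Phi x ≤ 1 :=
  integral_phi ▸ setIntegral_le_integral integrable_phi (.of_forall phi_nonneg)

lemma Phi_mono : Monotone Phi := fun _ _ hxy =>
  setIntegral_mono_set integrable_phi.integrableOn (.of_forall phi_nonneg)
    (Set.Iic_subset_Iic.mpr hxy).eventuallyLE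

lemma Phi_add_Phi_neg (y : ℝ) : Phi y + Phi (-y) = 1 := by
  have h_neg : Phi (-y) = ∫ x in Set.Ioi y, phi x := by
    rw [Phi, ← neg_neg y, ← integral_comp_neg_Iic, neg_neg]
    simp only [phi_neg]
  rw [h_neg, Phi, ← integral_phi]
  exact intervalIntegral.integral_Iic_add_Ioi integrable_phi.integrableOn
    integrable_phi.integrableOn

lemma integrable_phi_mul_Phi (c : ℝ) : Integrable fun x => phi x * Phi (c * x) :=
  integrable_phi.mul_bdd (Phi_mono.measurable.comp (measurable_const_mul c)).aestronglyMeasurable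
    (.of_forall fun x => by
      rw [Real.norm_eq_abs, abs_of_nonneg (Phi_nonneg _)]
      exact Phi_le_one _)

lemma integral_phi_mul_Phi (c : ℝ) : ∫ x, phi x * Phi (c * x) = 1 / 2 := by
  have h_reflect : ∫ x, phi x * Phi (c * x) = ∫ x, phi x * Phi (-(c * x)) := by
    rw [← integral_neg_eq_self]
    simp only [phi_neg, mul_neg]
  have h_sum : (∫ x, phi x * Phi (c * x)) + ∫ x, phi x * Phi (c * x) = 1 := by
    nth_rewrite 2 [h_reflect]
    have h_int := (integrable_phi_mul_Phi c).comp_neg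
    simp only [phi_neg, mul_neg] at h_int
    rw [← integral_add (integrable_phi_mul_Phi c) h_int, ← integral_phi]
    simp only [← mul_add, Phi_add_Phi_neg, mul_one]
  linarith

noncomputable def ajDeriv (a b t : ℝ) : ℝ := t ^ (-(3:ℝ)/2) * (t + b) / (2 * a * Real.sqrt b)

lemma rpow_neg_three_halves {t : ℝ} (ht : 0 ≤ t) : t ^ (-(3:ℝ)/2) = (Real.sqrt t ^ 3)⁻¹ := by
  rw [Real.sqrt_eq_rpow, ← Real.rpow_natCast, ← Real.rpow_mul ht, ← Real.rpow_neg ht]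
  norm_num

section aj

variable {a b t : ℝ}

lemma aj_eq (hb : 0 < b) (ht : 0 < t) :
    aj a b t = (t - b) / (a * Real.sqrt b * Real.sqrt t) := by
  have hsb := Real.sqrt_pos.mpr hb
  have hst := Real.sqrt_pos.mpr ht
  rw [aj, Real.sqrt_div ht.le, Real.sqrt_div hb.le, ← Real.sq_sqrt ht.le, ← Real.sq_sqrt hb.le,
    Real.sqrt_sq hst.le, Real.sqrt_sq hsb.le]
  field_simp

lemma aj_sq (hb : 0 < b) (ht : 0 < t) : aj a b t ^ 2 = (t / b + b / t - 2) / a ^ 2 := by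
  rw [aj_eq hb ht, div_pow, mul_pow, mul_pow, Real.sq_sqrt hb.le, Real.sq_sqrt ht.le]
  field_simp
  ring

lemma hasDerivAt_aj (hb : 0 < b) (ht : 0 < t) : HasDerivAt (aj a b) (ajDeriv a b t) t := by
  have h := ((((hasDerivAt_id t).div_const b).sqrt (div_pos ht hb).ne').sub
    (((hasDerivAt_const t b).div (hasDerivAt_id t) ht.ne').sqrt (div_pos hb ht).ne')).const_mul
    (1 / a)
  refine h.congr_deriv ?_
  have hsb := Real.sqrt_pos.mpr hb
  have hst := Real.sqrt_pos.mpr ht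
  simp only [id, Pi.div_apply]
  rw [ajDeriv, rpow_neg_three_halves ht.le, Real.sqrt_div ht.le, Real.sqrt_div hb.le,
    ← Real.sq_sqrt ht.le, ← Real.sq_sqrt hb.le, Real.sqrt_sq hst.le, Real.sqrt_sq hsb.le]
  field_simp
  ring

lemma ajDeriv_pos (ha : 0 < a) (hb : 0 < b) (ht : 0 < t) : 0 < ajDeriv a b t := by
  have := Real.rpow_pos_of_pos ht (-(3:ℝ)/2)
  have := Real.sqrt_pos.mpr hb
  unfold ajDeriv
  positivity

lemma strictMonoOn_aj (ha : 0 < a) (hb : 0 < b) : StrictMonoOn (aj a b) (Set.Ioi 0) :=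
  strictMonoOn_of_hasDerivWithinAt_pos (convex_Ioi 0)
    (fun _ ht => (hasDerivAt_aj hb ht).continuousAt.continuousWithinAt)
    (fun _ ht => (hasDerivAt_aj hb (interior_subset ht)).hasDerivWithinAt)
    (fun _ ht => ajDeriv_pos ha hb (interior_subset ht))

/-- The preimage of `x` is `b u²`, where `u > 0` is the root of `u² - a x u - 1 = 0`. -/
lemma image_aj_Ioi (ha : a ≠ 0) (hb : 0 < b) : aj a b '' Set.Ioi 0 = Set.univ := by
  refine Set.eq_univ_of_forall fun x => ?_
  set s := Real.sqrt ((a * x) ^ 2 + 4)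
  have hs_sq : s ^ 2 = (a * x) ^ 2 + 4 := Real.sq_sqrt (by positivity)
  have hs_gt : |a * x| < s := Real.lt_sqrt_of_sq_lt (by rw [sq_abs]; linarith)
  set u := (a * x + s) / 2 with hu_def
  have hu : 0 < u := by linarith [neg_abs_le (a * x)]
  have hu_root : u ^ 2 - a * x * u - 1 = 0 := by linear_combination hs_sq / 4
  have hbu : 0 < b * u ^ 2 := by positivity
  refine ⟨b * u ^ 2, hbu, ?_⟩
  rw [aj_eq hb hbu, Real.sqrt_mul hb.le, Real.sqrt_sq hu.le]
  field_simp
  rw [Real.sq_sqrt hb.le]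
  linear_combination b * hu_root

theorem integral_Ioi_ajDeriv_smul_comp_aj {E : Type*} [NormedAddCommGroup E] [NormedSpace ℝ E]
    (ha : 0 < a) (hb : 0 < b) (g : ℝ → E) :
    ∫ t in Set.Ioi 0, ajDeriv a b t • g (aj a b t) = ∫ x, g x := by
  have h := integral_image_eq_integral_abs_deriv_smul measurableSet_Ioi
    (fun _ ht => (hasDerivAt_aj hb ht).hasDerivWithinAt) (strictMonoOn_aj ha hb).injOn g
  rw [image_aj_Ioi ha.ne' hb, setIntegral_univ] at h
  rw [h]
  exact setIntegral_congr_fun measurableSet_Ioi fun t ht => by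
    rw [abs_of_pos (ajDeriv_pos ha hb ht)]

lemma fBS_eq (hb : 0 < b) (ht : 0 < t) : fBS a b t = phi (aj a b t) * ajDeriv a b t := by
  rw [fBS, phi, ajDeriv, neg_div, aj_sq hb ht]
  field_simp

end aj

lemma fSBVBS_eq (a1 a2 b1 b2 l t1 t2 : ℝ) :
    fSBVBS a1 a2 b1 b2 l t1 t2 = 2 * (phi (aj a1 b1 t1) * ajDeriv a1 b1 t1) *
      (ajDeriv a2 b2 t2 * (phi (aj a2 b2 t2) * Phi (l * aj a1 b1 t1 * aj a2 b2 t2))) := by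
  rw [fSBVBS, ajDeriv, ajDeriv]
  ring

theorem SBVBS_marginal_general (a1 a2 b1 b2 l t1 : ℝ)
    (ha2 : 0 < a2) (hb1 : 0 < b1) (hb2 : 0 < b2) (ht1 : 0 < t1) :
    ∫ t2 in Set.Ioi (0:ℝ), fSBVBS a1 a2 b1 b2 l t1 t2 = fBS a1 b1 t1 := by
  have h_subst := integral_Ioi_ajDeriv_smul_comp_aj ha2 hb2
    fun x => phi x * Phi (l * aj a1 b1 t1 * x)
  simp only [smul_eq_mul] at h_subst
  simp only [fSBVBS_eq]
  rw [integral_const_mul, h_subst, integral_phi_mul_Phi, fBS_eq hb1 ht1]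
  ring

theorem SBVBS_marginal (a1 a2 b1 b2 l t1 : ℝ)
    (ha1 : 0 < a1) (ha2 : 0 < a2) (hb1 : 0 < b1) (hb2 : 0 < b2) (ht1 : 0 < t1) :
    ∫ t2 in Set.Ioi (0:ℝ), fSBVBS a1 a2 b1 b2 l t1 t2 = fBS a1 b1 t1 :=
  SBVBS_marginal_general a1 a2 b1 b2 l t1 ha2 hb1 hb2 ht1
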